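/- Consider one-dimensional data where group 0 has density p₀ uniform with value 1/(2m) on [-m, m/2] and 1/m on [m/2, m] (equivalently the piecewise distribution with P(y=0|z=0)=3/4 mass below m/2), and group 1 has density p₁ uniform 1/(2m) on [-m, m]. Labels are y = 1{x ≥ m/2} for group 0 and y = 1{x ≥ 0} for group 1, with P(z=0)=1/4, P(z=1)=3/4. Among threshold classifiers (τ₀, τ₁) satisfying the Equal Improvability condition with budget δ = m/2, the classifier (τ₀, τ₁) = (0, 0) minimizes the classification error, achieving error 1/16. -/

import Mathlib

/-!
If `|τ₁| ≥ m/6`, group 1 alone contributes at least `3/4 · 1/12 = 1/16` to the error. Otherwise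
the group-1 EI ratio `(m/2)/(τ₁ + m)` lies strictly between `2/5` and `1`, while the group-0 ratio
is `0` for `τ₀ ≤ -m`, `1` on `(-m, -m/2]`, at most `2/5` for `τ₀ > m/2`, and `(m/2)/(τ₀ + m)` on
`[-m/2, m/2]`; so EI forces `τ₀ = τ₁`. The error of `(τ, τ)` is `(m/2 - τ + 3|τ|)/(8m) ≥ 1/16`,
with equality at `τ = 0`.
-/

open MeasureTheory

/-- Density of group 0: value 1/(2m) on [-m, m/2) and 1/m on [m/2, m]. -/
noncomputable def p0 (m x : ℝ) : ℝ :=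
  if -m ≤ x ∧ x < m / 2 then 1 / (2 * m)
  else if m / 2 ≤ x ∧ x ≤ m then 1 / m else 0

/-- Density of group 1: uniform 1/(2m) on [-m, m]. -/
noncomputable def p1 (m x : ℝ) : ℝ :=
  if -m ≤ x ∧ x ≤ m then 1 / (2 * m) else 0

/-- Misclassification mass of a threshold classifier τ against true threshold c. -/
noncomputable def errZ (p : ℝ → ℝ) (τ c : ℝ) : ℝ :=
  ∫ x in {x : ℝ | (τ ≤ x) ≠ (c ≤ x)}, p x

/-- Total classification error with P(z=0)=1/4, P(z=1)=3/4, true thresholds m/2 and 0. -/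
noncomputable def totalError (m τ₀ τ₁ : ℝ) : ℝ :=
  (1 / 4) * errZ (p0 m) τ₀ (m / 2) + (3 / 4) * errZ (p1 m) τ₁ 0

/-- Equal Improvability condition with effort budget δ. -/
def EIcond (m δ τ₀ τ₁ : ℝ) : Prop :=
  (∫ x in Set.Ico (τ₀ - δ) τ₀, p0 m x) / (∫ x in Set.Iio τ₀, p0 m x)
    = (∫ x in Set.Ico (τ₁ - δ) τ₁, p1 m x) / (∫ x in Set.Iio τ₁, p1 m x)

open Set

section IntervalIntegrals

variable {f : ℝ → ℝ} {a b c k : ℝ}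

theorem setIntegral_Ico_of_eqOn_const (hab : a ≤ b) (hf : EqOn f (fun _ => k) (Ico a b)) :
    ∫ x in Ico a b, f x = (b - a) * k := by
  rw [setIntegral_congr_fun measurableSet_Ico hf, setIntegral_const,
    Real.volume_real_Ico_of_le hab, smul_eq_mul]

theorem setIntegral_Ico_add_Ico (hac : a ≤ c) (hcb : c ≤ b) (hf₁ : IntegrableOn f (Ico a c))
    (hf₂ : IntegrableOn f (Ico c b)) :
    (∫ x in Ico a c, f x) + ∫ x in Ico c b, f x = ∫ x in Ico a b, f x := by
  rw [← setIntegral_union Ico_disjoint_Ico_same measurableSet_Ico hf₁ hf₂,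
    Ico_union_Ico_eq_Ico hac hcb]

theorem setIntegral_Iio_eq_setIntegral_Ico (hf : ∀ x < c, f x = 0) :
    ∫ x in Iio a, f x = ∫ x in Ico c a, f x :=
  setIntegral_eq_of_subset_of_forall_sdiff_eq_zero measurableSet_Iio Ico_subset_Iio_self
    fun x ⟨hxa, hxc⟩ => hf x (not_le.1 fun hcx => hxc ⟨hcx, hxa⟩)

end IntervalIntegrals

theorem errZ_eq_setIntegral_Ico (p : ℝ → ℝ) (τ c : ℝ) :
    errZ p τ c = ∫ x in Ico (min τ c) (max τ c), p x := by
  unfold errZ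
  congr 2
  ext x
  simp only [mem_ofPred_eq, mem_Ico, min_le_iff, max_le_iff, ← not_le, ne_eq, eq_iff_iff]
  tauto

theorem errZ_le_errZ_of_mem_uIcc {p : ℝ → ℝ} (hp : 0 ≤ p) (hi : Integrable p) {σ τ c : ℝ}
    (hσ : σ ∈ uIcc c τ) : errZ p σ c ≤ errZ p τ c := by
  rw [errZ_eq_setIntegral_Ico, errZ_eq_setIntegral_Ico]
  refine setIntegral_mono_set hi.integrableOn (ae_of_all _ hp)
    (ae_of_all _ (Ico_subset_Ico ?_ ?_))
  all_goals rcases mem_uIcc.1 hσ with ⟨h₁, h₂⟩ | ⟨h₁, h₂⟩ <;> grind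

section Densities

variable {m : ℝ}

theorem p0_eqOn_Ico : EqOn (p0 m) (fun _ => 1 / (2 * m)) (Ico (-m) (m / 2)) :=
  fun _ hx => if_pos hx

theorem p0_eqOn_Icc : EqOn (p0 m) (fun _ => 1 / m) (Icc (m / 2) m) := by
  intro x ⟨hx₁, hx₂⟩
  simp only [p0]
  rw [if_neg (fun h => (not_lt.2 hx₁) h.2), if_pos ⟨hx₁, hx₂⟩]

theorem p1_eqOn_Icc : EqOn (p1 m) (fun _ => 1 / (2 * m)) (Icc (-m) m) :=
  fun _ hx => if_pos hx

theorem p0_eq_zero_of_lt {x : ℝ} (hx : x < -m) : p0 m x = 0 := by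
  simp only [p0]
  rw [if_neg (fun h => (not_le.2 hx) h.1), if_neg (fun h => by linarith [h.1, h.2])]

theorem p1_eq_zero_of_lt {x : ℝ} (hx : x < -m) : p1 m x = 0 :=
  if_neg fun h => (not_le.2 hx) h.1

theorem p0_nonneg (hm : 0 < m) : 0 ≤ p0 m := by
  intro x
  unfold p0
  split_ifs <;> positivity

theorem p1_nonneg (hm : 0 < m) : 0 ≤ p1 m := by
  intro x
  unfold p1
  split_ifs <;> positivity

theorem p0_le (hm : 0 < m) (x : ℝ) : p0 m x ≤ 1 / m := by
  unfold p0
  split_ifs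
  · gcongr; linarith
  · rfl
  · positivity

theorem integrable_p0 : Integrable (p0 m) := by
  have : p0 m = (Ico (-m) (m / 2)).indicator (fun _ => 1 / (2 * m))
      + (Icc (m / 2) m).indicator (fun _ => 1 / m) := by
    ext x
    simp only [p0, Pi.add_apply, indicator, mem_Ico, mem_Icc]
    split_ifs <;> simp_all
    linarith
  rw [this]
  exact ((integrable_indicator_iff measurableSet_Ico).2
    (integrableOn_const measure_Ico_lt_top.ne)).add
    ((integrable_indicator_iff measurableSet_Icc).2 (integrableOn_const measure_Icc_lt_top.ne))

theorem integrable_p1 : Integrable (p1 m) := by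
  have : p1 m = (Icc (-m) m).indicator (fun _ => 1 / (2 * m)) := by
    ext x
    simp only [p1, indicator, mem_Icc]
  rw [this]
  exact (integrable_indicator_iff measurableSet_Icc).2 (integrableOn_const measure_Icc_lt_top.ne)

end Densities

section Masses

variable {m a b : ℝ}

theorem setIntegral_p1_Ico (ha : -m ≤ a) (hab : a ≤ b) (hb : b ≤ m) :
    ∫ x in Ico a b, p1 m x = (b - a) / (2 * m) := by
  rw [setIntegral_Ico_of_eqOn_const hab (p1_eqOn_Icc.mono (Ico_subset_Icc_self.trans
    (Icc_subset_Icc ha hb))), mul_one_div]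

theorem setIntegral_p1_Iio (ha : -m ≤ a) (hb : a ≤ m) :
    ∫ x in Iio a, p1 m x = (a + m) / (2 * m) := by
  rw [setIntegral_Iio_eq_setIntegral_Ico fun _ => p1_eq_zero_of_lt,
    setIntegral_p1_Ico le_rfl ha hb, sub_neg_eq_add]

theorem setIntegral_p0_Ico_of_le (ha : -m ≤ a) (hab : a ≤ b) (hb : b ≤ m / 2) :
    ∫ x in Ico a b, p0 m x = (b - a) / (2 * m) := by
  rw [setIntegral_Ico_of_eqOn_const hab (p0_eqOn_Ico.mono (Ico_subset_Ico ha hb)), mul_one_div]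

theorem setIntegral_p0_Ico_of_ge (ha : m / 2 ≤ a) (hab : a ≤ b) (hb : b ≤ m) :
    ∫ x in Ico a b, p0 m x = (b - a) / m := by
  rw [setIntegral_Ico_of_eqOn_const hab (p0_eqOn_Icc.mono (Ico_subset_Icc_self.trans
    (Icc_subset_Icc ha hb))), mul_one_div]

theorem setIntegral_p0_Ico_of_le_of_ge (ha : -m ≤ a) (ham : a ≤ m / 2) (hbm : m / 2 ≤ b)
    (hb : b ≤ m) :
    ∫ x in Ico a b, p0 m x = (m / 2 - a) / (2 * m) + (b - m / 2) / m := by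
  rw [← setIntegral_Ico_add_Ico ham hbm integrable_p0.integrableOn integrable_p0.integrableOn,
    setIntegral_p0_Ico_of_le ha ham le_rfl, setIntegral_p0_Ico_of_ge le_rfl hbm hb]

theorem setIntegral_p0_Iio_of_le (ha : -m ≤ a) (hb : a ≤ m / 2) :
    ∫ x in Iio a, p0 m x = (a + m) / (2 * m) := by
  rw [setIntegral_Iio_eq_setIntegral_Ico fun _ => p0_eq_zero_of_lt,
    setIntegral_p0_Ico_of_le le_rfl ha hb, sub_neg_eq_add]

theorem setIntegral_p0_Iio_of_ge (ha : m / 2 ≤ a) (hb : a ≤ m) :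
    ∫ x in Iio a, p0 m x = (m / 2 + m) / (2 * m) + (a - m / 2) / m := by
  rw [setIntegral_Iio_eq_setIntegral_Ico fun _ => p0_eq_zero_of_lt,
    setIntegral_p0_Ico_of_le_of_ge le_rfl (by linarith) ha hb, sub_neg_eq_add]

end Masses

noncomputable def eiRatio (p : ℝ → ℝ) (δ τ : ℝ) : ℝ :=
  (∫ x in Ico (τ - δ) τ, p x) / ∫ x in Iio τ, p x

theorem EIcond_iff {m δ τ₀ τ₁ : ℝ} :
    EIcond m δ τ₀ τ₁ ↔ eiRatio (p0 m) δ τ₀ = eiRatio (p1 m) δ τ₁ :=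
  Iff.rfl

section Ratios

variable {m τ : ℝ}

theorem eiRatio_p1 (hm : 0 < m) (h₁ : -(m / 2) ≤ τ) (h₂ : τ ≤ m) :
    eiRatio (p1 m) (m / 2) τ = m / 2 / (τ + m) := by
  rw [eiRatio, setIntegral_p1_Ico (by linarith) (by linarith) h₂,
    setIntegral_p1_Iio (by linarith) h₂, div_div_div_cancel_right₀ (by positivity),
    sub_sub_cancel]

theorem eiRatio_p0_of_le_neg (h : τ ≤ -m) : eiRatio (p0 m) (m / 2) τ = 0 := by
  rw [eiRatio, setIntegral_eq_zero_of_forall_eq_zero fun x hx => p0_eq_zero_of_lt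
    (lt_of_lt_of_le (mem_Iio.1 hx) h), div_zero]

theorem eiRatio_p0_of_mem_Ioc (hm : 0 < m) (h₁ : -m < τ) (h₂ : τ ≤ -(m / 2)) :
    eiRatio (p0 m) (m / 2) τ = 1 := by
  have hpos : 0 < ∫ x in Iio τ, p0 m x := by
    rw [setIntegral_p0_Iio_of_le h₁.le (by linarith)]
    exact div_pos (by linarith) (by positivity)
  rw [eiRatio, ← setIntegral_Iio_eq_setIntegral_Ico fun x hx => p0_eq_zero_of_lt (by linarith),
    div_self hpos.ne']

theorem eiRatio_p0_of_mem_Icc (hm : 0 < m) (h₁ : -(m / 2) ≤ τ) (h₂ : τ ≤ m / 2) :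
    eiRatio (p0 m) (m / 2) τ = m / 2 / (τ + m) := by
  rw [eiRatio, setIntegral_p0_Ico_of_le (by linarith) (by linarith) h₂,
    setIntegral_p0_Iio_of_le (by linarith) h₂, div_div_div_cancel_right₀ (by positivity),
    sub_sub_cancel]

theorem eiRatio_p0_le_of_gt (hm : 0 < m) (h : m / 2 < τ) : eiRatio (p0 m) (m / 2) τ ≤ 2 / 5 := by
  rcases le_or_gt τ m with hτ | hτ
  · rw [eiRatio, setIntegral_p0_Ico_of_le_of_ge (by linarith) (by linarith) h.le hτ,
      setIntegral_p0_Iio_of_ge h.le hτ, div_le_iff₀ (by positivity)]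
    field_simp
    linarith
  · have hnum : ∫ x in Ico (τ - m / 2) τ, p0 m x ≤ 1 / 2 :=
      calc ∫ x in Ico (τ - m / 2) τ, p0 m x ≤ ∫ _ in Ico (τ - m / 2) τ, 1 / m :=
            setIntegral_mono_on integrable_p0.integrableOn
              (integrableOn_const measure_Ico_lt_top.ne) measurableSet_Ico fun x _ => p0_le hm x
        _ = 1 / 2 := by
          rw [setIntegral_Ico_of_eqOn_const (by linarith) (eqOn_refl _ _)]
          field_simp
          ring
    have hden : 5 / 4 ≤ ∫ x in Iio τ, p0 m x :=
      calc 5 / 4 = ∫ x in Iio m, p0 m x := by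
            rw [setIntegral_p0_Iio_of_ge (by linarith) le_rfl]
            field_simp
            ring
        _ ≤ ∫ x in Iio τ, p0 m x :=
            setIntegral_mono_set integrable_p0.integrableOn (ae_of_all _ (p0_nonneg hm))
              (ae_of_all _ (Iio_subset_Iio hτ.le))
    rw [eiRatio, div_le_iff₀ (by linarith)]
    linarith

end Ratios

section Errors

variable {m τ : ℝ}

theorem errZ_p1 (h : |τ| ≤ m) : errZ (p1 m) τ 0 = |τ| / (2 * m) := by
  have hlo : -m ≤ min τ 0 := le_min (neg_le_of_abs_le h) (by linarith [abs_nonneg τ])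
  have hhi : max τ 0 ≤ m := max_le (le_of_abs_le h) ((abs_nonneg τ).trans h)
  rw [errZ_eq_setIntegral_Ico, setIntegral_p1_Ico hlo min_le_max hhi, max_sub_min_eq_abs',
    sub_zero]

theorem one_div_twelve_le_errZ_p1 (hm : 0 < m) (h : m / 6 ≤ |τ|) : 1 / 12 ≤ errZ (p1 m) τ 0 := by
  obtain ⟨σ, hσ, hστ⟩ : ∃ σ, |σ| = m / 6 ∧ σ ∈ uIcc 0 τ := by
    rcases le_abs'.1 h with h | h
    · exact ⟨-(m / 6), by rw [abs_neg, abs_of_pos (by positivity)],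
        mem_uIcc.2 (Or.inr ⟨h, by linarith⟩)⟩
    · exact ⟨m / 6, abs_of_pos (by positivity), mem_uIcc.2 (Or.inl ⟨by linarith, h⟩)⟩
  calc 1 / 12 = errZ (p1 m) σ 0 := by
        rw [errZ_p1 (by linarith), hσ]
        field_simp
        ring
    _ ≤ errZ (p1 m) τ 0 := errZ_le_errZ_of_mem_uIcc (p1_nonneg hm) integrable_p1 hστ

theorem errZ_p0 (h₁ : -m ≤ τ) (h₂ : τ ≤ m / 2) :
    errZ (p0 m) τ (m / 2) = (m / 2 - τ) / (2 * m) := by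
  rw [errZ_eq_setIntegral_Ico, min_eq_left h₂, max_eq_right h₂,
    setIntegral_p0_Ico_of_le h₁ h₂ le_rfl]

theorem totalError_self (hm : 0 < m) (h : |τ| ≤ m / 2) :
    totalError m τ τ = (m / 2 - τ + 3 * |τ|) / (8 * m) := by
  rw [totalError, errZ_p0 (by linarith [neg_abs_le τ]) ((le_abs_self τ).trans h),
    errZ_p1 (by linarith)]
  field_simp
  ring

end Errors

theorem eq_of_EIcond {m τ₀ τ₁ : ℝ} (hm : 0 < m) (hτ₁ : |τ₁| < m / 6)
    (hEI : EIcond m (m / 2) τ₀ τ₁) : τ₀ = τ₁ := by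
  obtain ⟨hlo, hhi⟩ := abs_lt.1 hτ₁
  rw [EIcond_iff, eiRatio_p1 hm (by linarith) (by linarith)] at hEI
  have hr₁ : m / 2 / (τ₁ + m) < 1 := (div_lt_one (by linarith)).2 (by linarith)
  have hr₂ : 2 / 5 < m / 2 / (τ₁ + m) := by
    rw [lt_div_iff₀ (by linarith)]
    linarith
  rcases le_or_gt τ₀ (-m) with h₀ | h₀
  · rw [eiRatio_p0_of_le_neg h₀] at hEI
    linarith
  rcases le_or_gt τ₀ (-(m / 2)) with h₁ | h₁
  · rw [eiRatio_p0_of_mem_Ioc hm h₀ h₁] at hEI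
    linarith
  rcases le_or_gt τ₀ (m / 2) with h₂ | h₂
  · rw [eiRatio_p0_of_mem_Icc hm h₁.le h₂, div_eq_div_iff (by linarith) (by linarith)] at hEI
    nlinarith
  · linarith [eiRatio_p0_le_of_gt hm h₂]

theorem one_div_sixteen_le_totalError {m τ₀ τ₁ : ℝ} (hm : 0 < m)
    (hEI : EIcond m (m / 2) τ₀ τ₁) : 1 / 16 ≤ totalError m τ₀ τ₁ := by
  rcases le_or_gt (m / 6) |τ₁| with hτ₁ | hτ₁
  · have h₀ : 0 ≤ errZ (p0 m) τ₀ (m / 2) := integral_nonneg (p0_nonneg hm)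
    have h₁ := one_div_twelve_le_errZ_p1 hm hτ₁
    rw [totalError]
    linarith
  · obtain rfl := eq_of_EIcond hm hτ₁ hEI
    rw [totalError_self hm (by linarith), le_div_iff₀ (by positivity)]
    linarith [le_abs_self τ₀, neg_abs_le τ₀]

/-- Among threshold classifiers satisfying EI with budget δ = m/2, the classifier
(τ₀, τ₁) = (0, 0) minimizes the classification error, achieving error 1/16. -/
theorem optimal_ei_classifier (m : ℝ) (hm : 0 < m) :
    EIcond m (m / 2) 0 0 ∧ totalError m 0 0 = 1 / 16 ∧
    ∀ τ₀ τ₁ : ℝ, EIcond m (m / 2) τ₀ τ₁ → totalError m 0 0 ≤ totalError m τ₀ τ₁ := by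
  have herr : totalError m 0 0 = 1 / 16 := by
    rw [totalError_self hm (by rw [abs_zero]; positivity)]
    field_simp
    ring
  refine ⟨?_, herr, fun τ₀ τ₁ hEI => herr ▸ one_div_sixteen_le_totalError hm hEI⟩
  rw [EIcond_iff, eiRatio_p0_of_mem_Icc hm (by linarith) (by linarith),
    eiRatio_p1 hm (by linarith) (by linarith)]
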